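/- For the q = 2 model, if J₁ < 0 and J₁ < J₀, then the per capita investment l(β,J₀,J₁) given by the explicit formula tends to 1 as β → ∞; if J₀ < 0 and J₀ < J₁, then l(β,J₀,J₁) tends to 0 as β → ∞; and if both J₀ > 0 and J₁ > 0, then l(β,J₀,J₁) tends to 1/2 as β → ∞. -/

import Mathlib

open Real

/-- The discriminant `Δ(β, J₀, J₁)` of the `q = 2` model. -/
noncomputable def q2Delta (β J₀ J₁ : ℝ) : ℝ :=
  4 * exp (2 * β * J₁) - 2 * exp (β * (J₁ - J₀)) + exp (2 * β * (J₁ - J₀)) + 1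

/-- The closed-form per capita investment of the `q = 2` model in the
thermodynamic limit. -/
noncomputable def q2Investment (β J₀ J₁ : ℝ) : ℝ :=
  (-exp (β * (J₁ - J₀)) + 2 * exp (2 * β * J₁) + 1 + Real.sqrt (q2Delta β J₀ J₁)) /
  (4 * exp (2 * β * J₁) - 2 * exp (β * (J₁ - J₀)) + exp (2 * β * (J₁ - J₀))
    + exp (β * (J₁ - J₀)) * Real.sqrt (q2Delta β J₀ J₁) + Real.sqrt (q2Delta β J₀ J₁) + 1)


open Filter Topology

/-!
With `x = e^{β(J₁-J₀)}` and `y = e^{βJ₁}` the discriminant is the sum of squares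
`Δ = (1 - x)² + 4y²`, and with `s = √Δ` the numerator and denominator factor as
`((s + 1)² - x²) / 2` and `s (s + 1 + x)`. Hence `l = (1 + (1 - x) / s) / 2 = algSigmoid u`
with `u = (1 - x) / (2y) = (e^{-βJ₁} - e^{-βJ₀}) / 2`.
The sigmoid tends to `1`, `0` at `±∞` and equals `1/2` at `0`, while `u` tends to `+∞`, `-∞`
or `0` in the three regimes: whichever of `e^{-βJ₁}`, `e^{-βJ₀}` grows fastest wins.
-/

noncomputable def algSigmoid (u : ℝ) : ℝ := (1 + u / √(1 + u ^ 2)) / 2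

lemma algSigmoid_zero : algSigmoid 0 = 1 / 2 := by
  simp [algSigmoid]

lemma algSigmoid_neg (u : ℝ) : algSigmoid (-u) = 1 - algSigmoid u := by
  simp only [algSigmoid, neg_sq]
  ring

lemma continuous_algSigmoid : Continuous algSigmoid := by
  unfold algSigmoid
  fun_prop (disch := intro u; positivity)

lemma tendsto_div_sqrt_one_add_sq_atTop :
    Tendsto (fun u : ℝ => u / √(1 + u ^ 2)) atTop (𝓝 1) := by
  have hlim : Tendsto (fun u : ℝ => 1 / √((u ^ 2)⁻¹ + 1)) atTop (𝓝 (1 / √(0 + 1))) :=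
    tendsto_const_nhds.div
      ((tendsto_pow_atTop two_ne_zero).inv_tendsto_atTop.add_const 1).sqrt (by norm_num)
  simp only [zero_add, sqrt_one, div_one] at hlim
  refine hlim.congr' ?_
  filter_upwards [eventually_gt_atTop 0] with u hu
  have h : (u ^ 2)⁻¹ + 1 = (1 + u ^ 2) / u ^ 2 := by field_simp
  rw [h, sqrt_div' _ (by positivity), sqrt_sq hu.le, one_div_div]

lemma tendsto_algSigmoid_atTop : Tendsto algSigmoid atTop (𝓝 1) := by
  have h := (tendsto_div_sqrt_one_add_sq_atTop.const_add 1).div_const 2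
  rwa [show ((1 : ℝ) + 1) / 2 = 1 by norm_num] at h

lemma tendsto_algSigmoid_atBot : Tendsto algSigmoid atBot (𝓝 0) := by
  simpa [Function.comp_def, algSigmoid_neg] using
    (tendsto_algSigmoid_atTop.comp tendsto_neg_atBot_atTop).const_sub 1

lemma div_eq_algSigmoid (x : ℝ) {y : ℝ} (hy : 0 < y) :
    (-x + 2 * y ^ 2 + 1 + √(4 * y ^ 2 - 2 * x + x ^ 2 + 1)) /
      (4 * y ^ 2 - 2 * x + x ^ 2 + x * √(4 * y ^ 2 - 2 * x + x ^ 2 + 1)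
        + √(4 * y ^ 2 - 2 * x + x ^ 2 + 1) + 1) = algSigmoid ((1 - x) / (2 * y)) := by
  set s := √(4 * y ^ 2 - 2 * x + x ^ 2 + 1)
  have hΔ : 0 < 4 * y ^ 2 - 2 * x + x ^ 2 + 1 := by nlinarith [sq_nonneg (1 - x)]
  have hs_sq : s ^ 2 = 4 * y ^ 2 - 2 * x + x ^ 2 + 1 := sq_sqrt hΔ.le
  have hs_pos : 0 < s := sqrt_pos.2 hΔ
  have hs_gt : 1 - x < s := by nlinarith
  have hsqrt : √(1 + ((1 - x) / (2 * y)) ^ 2) = s / (2 * y) := by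
    rw [sqrt_eq_iff_mul_self_eq (by positivity) (by positivity)]
    field_simp
    linear_combination -hs_sq
  have hden : 4 * y ^ 2 - 2 * x + x ^ 2 + x * s + s + 1 = s * (s + 1 + x) := by
    linear_combination -hs_sq
  rw [algSigmoid, hsqrt, hden,
    div_eq_div_iff (mul_pos hs_pos (by linarith)).ne' (by positivity)]
  field_simp
  linear_combination -hs_sq

lemma q2Investment_eq_algSigmoid (β J₀ J₁ : ℝ) :
    q2Investment β J₀ J₁ = algSigmoid ((exp (-(β * J₁)) - exp (-(β * J₀))) / 2) := by
  have hsq (a : ℝ) : exp (2 * β * a) = exp (β * a) ^ 2 := by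
    rw [← exp_nat_mul]; ring_nf
  have hu : (exp (-(β * J₁)) - exp (-(β * J₀))) / 2
      = (1 - exp (β * (J₁ - J₀))) / (2 * exp (β * J₁)) := by
    rw [mul_sub, exp_sub, exp_neg, exp_neg]
    field_simp
  rw [q2Investment, q2Delta, hsq, hsq, hu, div_eq_algSigmoid _ (exp_pos _)]

lemma tendsto_exp_neg_mul_atTop_nhds_zero {J : ℝ} (hJ : 0 < J) :
    Tendsto (fun β => exp (-(β * J))) atTop (𝓝 0) :=
  tendsto_exp_neg_atTop_nhds_zero.comp (tendsto_id.atTop_mul_const hJ)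

lemma tendsto_exp_neg_mul_atTop_atTop {J : ℝ} (hJ : J < 0) :
    Tendsto (fun β => exp (-(β * J))) atTop atTop :=
  tendsto_exp_atTop.comp (tendsto_neg_atBot_atTop.comp (tendsto_id.atTop_mul_const_of_neg hJ))

lemma tendsto_exp_neg_mul_sub_exp_neg_mul_atTop {J₀ J₁ : ℝ} (h₁ : J₁ < 0) (h₁₀ : J₁ < J₀) :
    Tendsto (fun β => (exp (-(β * J₁)) - exp (-(β * J₀))) / 2) atTop atTop := by
  have hratio := (tendsto_exp_neg_mul_atTop_nhds_zero (sub_pos.2 h₁₀)).const_sub 1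
  refine ((tendsto_exp_neg_mul_atTop_atTop h₁).atTop_mul_pos (C := 1 / 2) (by norm_num)
    (by simpa using hratio.div_const 2)).congr fun β => ?_
  rw [show -(β * (J₀ - J₁)) = -(β * J₀) - -(β * J₁) by ring, exp_sub]
  field_simp

/-- Limits of the `q = 2` per capita investment as `β → ∞`:
it tends to `1` if `J₁ < 0` and `J₁ < J₀`, to `0` if `J₀ < 0` and `J₀ < J₁`,
and to `1/2` if both `J₀ > 0` and `J₁ > 0`. -/
theorem q2_investment_beta_limits (J₀ J₁ : ℝ) :
    (J₁ < 0 → J₁ < J₀ →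
      Tendsto (fun β => q2Investment β J₀ J₁) atTop (nhds 1)) ∧
    (J₀ < 0 → J₀ < J₁ →
      Tendsto (fun β => q2Investment β J₀ J₁) atTop (nhds 0)) ∧
    (0 < J₀ → 0 < J₁ →
      Tendsto (fun β => q2Investment β J₀ J₁) atTop (nhds (1 / 2))) := by
  simp only [q2Investment_eq_algSigmoid]
  refine ⟨fun h₁ h₁₀ => ?_, fun h₀ h₀₁ => ?_, fun h₀ h₁ => ?_⟩
  · exact tendsto_algSigmoid_atTop.comp (tendsto_exp_neg_mul_sub_exp_neg_mul_atTop h₁ h₁₀)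
  · refine tendsto_algSigmoid_atBot.comp (tendsto_neg_atTop_atBot.comp
      (tendsto_exp_neg_mul_sub_exp_neg_mul_atTop h₀ h₀₁)) |>.congr fun β => ?_
    simp only [Function.comp_apply]
    congr 1
    ring
  · have hu : Tendsto (fun β => (exp (-(β * J₁)) - exp (-(β * J₀))) / 2) atTop (𝓝 0) := by
      simpa using ((tendsto_exp_neg_mul_atTop_nhds_zero h₁).sub
        (tendsto_exp_neg_mul_atTop_nhds_zero h₀)).div_const 2
    simpa [algSigmoid_zero, Function.comp_def] using (continuous_algSigmoid.tendsto 0).comp hu
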